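/- Sufficiency direction of the main theorem (Theorem 3.6), cocycle formulation: let |δ| > 0 be a real number with |δ|² ∈ ℚ, let Λ ⊆ W be an additive subgroup spanning W as a real vector space, and let N ∈ ℚ, N > 0, be such that ω(t,t') := Im⟨t',t⟩/(N·|δ|) ∈ ℤ for all t,t' ∈ Λ; form the Heisenberg group Γ = ℤ ×_ω Λ with multiplication (a,t)(a',t') = (a+a'+ω(t,t'), t+t'). Let λ_1,…,λ_r ∈ W with ⟨λ_i,λ_i⟩ ∈ ℚ and a_1,…,a_r ∈ ℤ, and suppose the Chern cocycle c(t,t') := −|δ|·Σ_i a_i·Im F_{λ_i}(t,t') takes values in ℤ on Λ × Λ. If Σ_i a_i·[F_{λ_i}(t,t') − (⟨λ_i,λ_i⟩/n)·⟨t',t⟩] = 0 for all t,t' ∈ Λ, then there exist an integer m ≥ 1 and a function u : Γ → ℤ such that m·c(t,t') = u(g) + u(g') − u(g·g') for all g = (a,t), g' = (a',t') ∈ Γ; i.e. the Chern class of the corresponding local Heegner divisor is a torsion element of H²(Γ, ℤ). -/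

import Mathlib

open Complex

/-- The form `F_λ(x,y) = ⟨x,λ⟩⟨y,λ⟩ + ⟨λ,x⟩⟨y,λ⟩ (= 2Re(⟨x,λ⟩)·⟨y,λ⟩)`. -/
noncomputable def Fform {W : Type*} [AddCommGroup W] [Module ℂ W]
    (B : W →ₗ[ℂ] W →ₛₗ[starRingEnd ℂ] ℂ) (lam x y : W) : ℂ :=
  B x lam * B y lam + B lam x * B y lam

/-! The torsion condition makes `Σᵢ aᵢ F_{λᵢ}` a multiple `(Σᵢ aᵢ⟨λᵢ,λᵢ⟩/n)·⟨t',t⟩` of the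
hermitian form, so the Chern cocycle `c` is a rational multiple `s·ω` of the Heisenberg
cocycle. On `Γ = ℤ ×_ω Λ` the cocycle `ω` is the coboundary of `(a,t) ↦ -a`, hence
`den s · c = num s · ω` is a coboundary as well. -/

theorem exists_mul_eq_heisenberg_coboundary_of_eq_ratCast_mul {Λ : Type*} [Add Λ]
    (ω c : Λ → Λ → ℤ) (s : ℚ) (hc : ∀ t t', (c t t' : ℚ) = s * ω t t') :
    ∃ m : ℕ, 1 ≤ m ∧ ∃ u : ℤ × Λ → ℤ, ∀ g g' : ℤ × Λ,
      (m : ℤ) * c g.2 g'.2 = u g + u g' - u (g.1 + g'.1 + ω g.2 g'.2, g.2 + g'.2) := by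
  refine ⟨s.den, s.den_pos, fun g => s.num * -g.1, fun g g' => ?_⟩
  have hden : c g.2 g'.2 * s.den = s.num * ω g.2 g'.2 := by
    have h := hc g.2 g'.2
    rw [← Rat.num_div_den s] at h
    field_simp at h
    exact_mod_cast h
  linear_combination hden

theorem sum_mul_Fform_eq_of_torsion {W : Type*} [AddCommGroup W] [Module ℂ W]
    (B : W →ₗ[ℂ] W →ₛₗ[starRingEnd ℂ] ℂ) {ι : Type*} (s : Finset ι) (lam : ι → W) (a : ι → ℂ)
    (κ : ℂ) (x y : W)
    (h : ∑ i ∈ s, a i * (Fform B (lam i) x y - B (lam i) (lam i) / κ * B y x) = 0) :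
    ∑ i ∈ s, a i * Fform B (lam i) x y = (∑ i ∈ s, a i * B (lam i) (lam i)) / κ * B y x := by
  simp only [mul_sub, Finset.sum_sub_distrib, sub_eq_zero] at h
  rw [h, Finset.sum_div, Finset.sum_mul]
  exact Finset.sum_congr rfl fun i _ => by ring

theorem main_theorem_sufficiency_general {W : Type*} [AddCommGroup W] [Module ℂ W]
    (n : ℕ)
    (B : W →ₗ[ℂ] W →ₛₗ[starRingEnd ℂ] ℂ)
    (d : ℝ) (hd : 0 < d) (hd2 : ∃ q : ℚ, (q : ℝ) = d ^ 2)
    (Λ : AddSubgroup W)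
    (N : ℚ) (hN : 0 < N)
    (ωZ : Λ → Λ → ℤ)
    (hωZ : ∀ t t' : Λ, ((ωZ t t' : ℤ) : ℝ) = (B (t' : W) (t : W)).im / ((N : ℝ) * d))
    (r : ℕ) (lam : Fin r → W)
    (hlam : ∀ i, ∃ q : ℚ, B (lam i) (lam i) = (q : ℂ))
    (a : Fin r → ℤ)
    (cZ : Λ → Λ → ℤ)
    (hcZ : ∀ t t' : Λ, ((cZ t t' : ℤ) : ℝ)
      = -d * ∑ i, (a i : ℝ) * (Fform B (lam i) (t : W) (t' : W)).im)
    (htors : ∀ t t' : Λ, ∑ i, (a i : ℂ) *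
      (Fform B (lam i) (t : W) (t' : W)
        - (B (lam i) (lam i) / (n : ℂ)) * B (t' : W) (t : W)) = 0) :
    ∃ m : ℕ, 1 ≤ m ∧ ∃ u : ℤ × Λ → ℤ, ∀ g g' : ℤ × Λ,
      (m : ℤ) * cZ g.2 g'.2
        = u g + u g' - u (g.1 + g'.1 + ωZ g.2 g'.2, g.2 + g'.2) := by
  obtain ⟨δ2, hδ2⟩ := hd2
  choose q hq using hlam
  refine exists_mul_eq_heisenberg_coboundary_of_eq_ratCast_mul ωZ cZ
    (-((∑ i, a i * q i) * N * δ2 / n)) fun t t' => ?_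
  have hF := sum_mul_Fform_eq_of_torsion B _ lam _ _ _ _ (htors t t')
  simp only [hq] at hF
  have hIm : ∑ i, (a i : ℝ) * (Fform B (lam i) t t').im
      = ((∑ i, a i * q i : ℚ) / n : ℝ) * (B (t' : W) (t : W)).im := by
    simpa only [im_sum, ← ofReal_intCast, ← ofReal_ratCast, ← ofReal_natCast, ← ofReal_mul,
      ← ofReal_sum, ← ofReal_div, im_ofReal_mul, Rat.cast_sum, Rat.cast_mul, Rat.cast_intCast]
      using congrArg Complex.im hF
  have hB : (B (t' : W) (t : W)).im = ωZ t t' * (N * d) := by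
    rw [hωZ]
    field_simp
  apply Rat.cast_injective (α := ℝ)
  push_cast
  rw [hcZ, hIm, hB, hδ2]
  push_cast
  ring

/-- Sufficiency direction of the main theorem, cocycle formulation: if the
torsion condition `Σᵢ aᵢ·[F_{λᵢ}(t,t') − (⟨λᵢ,λᵢ⟩/n)·⟨t',t⟩] = 0` holds on the
lattice `Λ`, then some positive multiple of the Chern cocycle
`c(t,t') = −|δ|·Σᵢ aᵢ·Im F_{λᵢ}(t,t')` is a coboundary on the Heisenberg group
`Γ = ℤ ×_ω Λ`; i.e. the Chern class of the corresponding local Heegner divisor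
is a torsion element of `H²(Γ,ℤ)`. -/
theorem main_theorem_sufficiency {W : Type*} [AddCommGroup W] [Module ℂ W]
    [Module ℝ W] [IsScalarTower ℝ ℂ W] [FiniteDimensional ℂ W]
    (n : ℕ) (hn : 1 ≤ n) (hdim : Module.finrank ℂ W = n)
    (B : W →ₗ[ℂ] W →ₛₗ[starRingEnd ℂ] ℂ)
    (hherm : ∀ v w : W, B w v = starRingEnd ℂ (B v w))
    (hneg : ∀ w : W, w ≠ 0 → (B w w).re < 0)
    (d : ℝ) (hd : 0 < d) (hd2 : ∃ q : ℚ, (q : ℝ) = d ^ 2)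
    (Λ : AddSubgroup W) (hspan : Submodule.span ℝ (Λ : Set W) = ⊤)
    (N : ℚ) (hN : 0 < N)
    (ωZ : Λ → Λ → ℤ)
    (hωZ : ∀ t t' : Λ, ((ωZ t t' : ℤ) : ℝ) = (B (t' : W) (t : W)).im / ((N : ℝ) * d))
    (r : ℕ) (lam : Fin r → W)
    (hlam : ∀ i, ∃ q : ℚ, B (lam i) (lam i) = (q : ℂ))
    (a : Fin r → ℤ)
    (cZ : Λ → Λ → ℤ)
    (hcZ : ∀ t t' : Λ, ((cZ t t' : ℤ) : ℝ)
      = -d * ∑ i, (a i : ℝ) * (Fform B (lam i) (t : W) (t' : W)).im)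
    (htors : ∀ t t' : Λ, ∑ i, (a i : ℂ) *
      (Fform B (lam i) (t : W) (t' : W)
        - (B (lam i) (lam i) / (n : ℂ)) * B (t' : W) (t : W)) = 0) :
    ∃ m : ℕ, 1 ≤ m ∧ ∃ u : ℤ × Λ → ℤ, ∀ g g' : ℤ × Λ,
      (m : ℤ) * cZ g.2 g'.2
        = u g + u g' - u (g.1 + g'.1 + ωZ g.2 g'.2, g.2 + g'.2) :=
  main_theorem_sufficiency_general n B d hd hd2 Λ N hN ωZ hωZ r lam hlam a cZ hcZ htors
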